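/- arXiv:1311.0400 — 2 statements merged into one kernel-verified Lean document; each statement's English description precedes it below -/
import Mathlib

section
/- Let d ≥ 1 and 0 < α < d, and let f be a Schwartz function on ℝ^d. Then there exist constants C, R > 0 such that |I_α f(x)| ≤ C ‖x‖^{α−d} for all x with ‖x‖ ≥ R; that is, I_α f(x) = O(‖x‖^{α−d}) as ‖x‖ → ∞. (This is the claim of Remark 3.1 of the paper in the classical case k ≡ 0.) -/
open MeasureTheory Set

noncomputable section

/-- The classical Riesz potential `I_α f` on `ℝ^d`:
`I_α f(x) = (2^{d/2−α} Γ((d−α)/2)/Γ(α/2)) ∫ f(y) ‖x−y‖^{α−d} dy`. -/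
def rieszPotential (d : ℕ) (α : ℝ) (f : EuclideanSpace ℝ (Fin d) → ℝ)
    (x : EuclideanSpace ℝ (Fin d)) : ℝ :=
  ((2 : ℝ) ^ ((d : ℝ) / 2 - α) * Real.Gamma (((d : ℝ) - α) / 2) / Real.Gamma (α / 2)) *
    ∫ y, f y * ‖x - y‖ ^ (α - (d : ℝ))

/-!
Split the integral at the ball `B(x, ‖x‖/2)`. On that ball `‖y‖ ≥ ‖x‖/2`, so the decay
`‖y‖^d |f y| ≤ A` bounds `|f|` by `A (‖x‖/2)^{-d}`, while by homogeneity the kernel integrates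
over it to `(‖x‖/2)^α` times its integral over the unit ball, finite since `α > 0`. Off the
ball the kernel is at most `(‖x‖/2)^{α-d}` and `f` is integrable.
-/

open Metric Module

section

variable {E : Type*} [NormedAddCommGroup E] [NormedSpace ℝ E] [FiniteDimensional ℝ E]
  [MeasurableSpace E] [BorelSpace E] (μ : Measure E) [μ.IsAddHaarMeasure]

theorem integrableOn_ball_norm_rpow [Nontrivial E] {s : ℝ} (hs : -(finrank ℝ E : ℝ) < s)
    (r : ℝ) : IntegrableOn (fun z : E ↦ ‖z‖ ^ s) (ball 0 r) μ := by
  rcases le_or_gt r 0 with hr | hr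
  · simp [ball_eq_empty.mpr hr]
  have hd : 1 ≤ finrank ℝ E := finrank_pos
  refine (integrableOn_fun_norm_addHaar μ (f := fun t ↦ t ^ s)).mpr ?_
  have hpow : IntegrableOn (fun t : ℝ ↦ t ^ (s + (finrank ℝ E - 1 : ℕ))) (Ioo 0 r) :=
    (intervalIntegral.integrableOn_Ioo_rpow_iff hr).mpr (by push_cast [Nat.cast_sub hd]; linarith)
  refine hpow.congr_fun (fun t ht ↦ ?_) measurableSet_Ioo
  dsimp only
  rw [Real.rpow_add ht.1, Real.rpow_natCast, smul_eq_mul, mul_comm]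

theorem setIntegral_ball_norm_rpow (s : ℝ) {r : ℝ} (hr : 0 < r) :
    ∫ z in ball (0 : E) r, ‖z‖ ^ s ∂μ =
      r ^ (s + finrank ℝ E) * ∫ z in ball (0 : E) 1, ‖z‖ ^ s ∂μ := by
  have h := Measure.setIntegral_comp_smul_of_pos μ (fun z : E ↦ ‖z‖ ^ s) (ball 0 1) hr
  simp only [norm_smul, Real.norm_of_nonneg hr.le, smul_unitBall_of_pos hr, smul_eq_mul] at h
  simp_rw [Real.mul_rpow hr.le (norm_nonneg _), integral_const_mul] at h
  rw [Real.rpow_add hr, Real.rpow_natCast, mul_right_comm, h]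
  field_simp

theorem integral_abs_mul_norm_sub_rpow_le [Nontrivial E] {f : E → ℝ} (hf : Integrable f μ)
    {A : ℝ} (hA : ∀ y, ‖y‖ ^ finrank ℝ E * |f y| ≤ A) {s : ℝ} (hs : -(finrank ℝ E : ℝ) < s)
    (hs₀ : s ≤ 0) {x : E} (hx : x ≠ 0) :
    ∫ y, |f y| * ‖x - y‖ ^ s ∂μ ≤
      (A * ∫ z in ball (0 : E) 1, ‖z‖ ^ s ∂μ + ∫ y, |f y| ∂μ) * (‖x‖ / 2) ^ s := by
  set d := finrank ℝ E
  set r := ‖x‖ / 2 with hr_def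
  have hr : 0 < r := by positivity
  set near : E → ℝ := fun y ↦ (ball (0 : E) r).indicator (‖·‖ ^ s) (y - x)
  have near_int : Integrable near μ :=
    ((integrableOn_ball_norm_rpow μ hs r).integrable_indicator measurableSet_ball).comp_sub_right x
  have integral_near : ∫ y, near y ∂μ = r ^ (s + d) * ∫ z in ball (0 : E) 1, ‖z‖ ^ s ∂μ := by
    rw [integral_sub_right_eq_self (fun z ↦ (ball (0 : E) r).indicator (‖·‖ ^ s) z) x,
      integral_indicator measurableSet_ball, setIntegral_ball_norm_rpow μ s hr]
  have pointwise : ∀ y, |f y| * ‖x - y‖ ^ s ≤ A / r ^ d * near y + r ^ s * |f y| := by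
    intro y
    by_cases hy : y - x ∈ ball (0 : E) r
    · have hyr : r ≤ ‖y‖ := by
        rw [mem_ball_zero_iff] at hy
        linarith [norm_sub_norm_le x y, norm_sub_rev x y]
      have hfy : |f y| ≤ A / r ^ d := by
        rw [le_div_iff₀ (by positivity), mul_comm]
        exact (mul_le_mul_of_nonneg_right (pow_le_pow_left₀ hr.le hyr d) (abs_nonneg _)).trans
          (hA y)
      simp only [near, indicator_of_mem hy, norm_sub_rev y x]
      nlinarith [Real.rpow_nonneg (norm_nonneg (x - y)) s, Real.rpow_nonneg hr.le s,
        abs_nonneg (f y)]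
    · have hyr : r ≤ ‖x - y‖ := by
        rw [mem_ball_zero_iff, not_lt, norm_sub_rev] at hy
        exact hy
      have hk : ‖x - y‖ ^ s ≤ r ^ s := Real.rpow_le_rpow_of_nonpos hr hyr hs₀
      simp only [near, indicator_of_notMem hy, mul_zero, zero_add]
      nlinarith [abs_nonneg (f y)]
  calc ∫ y, |f y| * ‖x - y‖ ^ s ∂μ
      ≤ ∫ y, (A / r ^ d * near y + r ^ s * |f y|) ∂μ :=
        integral_mono_of_nonneg (.of_forall fun y ↦ by positivity)
          ((near_int.const_mul _).add (hf.abs.const_mul _)) (.of_forall pointwise)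
    _ = A / r ^ d * (r ^ (s + d) * ∫ z in ball (0 : E) 1, ‖z‖ ^ s ∂μ) + r ^ s * ∫ y, |f y| ∂μ := by
        rw [integral_add (near_int.const_mul _) (hf.abs.const_mul _), integral_const_mul,
          integral_const_mul, integral_near]
    _ = _ := by
        rw [Real.rpow_add hr, Real.rpow_natCast]
        field_simp

end

theorem stmt_2_general (d : ℕ) (α : ℝ) (hα : 0 < α) (hαd : α < d)
    (f : SchwartzMap (EuclideanSpace ℝ (Fin d)) ℝ) :
    ∃ C R : ℝ, 0 < C ∧ 0 < R ∧ ∀ x : EuclideanSpace ℝ (Fin d), R ≤ ‖x‖ →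
      |rieszPotential d α (fun y => f y) x| ≤ C * ‖x‖ ^ (α - (d : ℝ)) := by
  have : Nonempty (Fin d) := ⟨⟨0, by exact_mod_cast hα.trans hαd⟩⟩
  set E := EuclideanSpace ℝ (Fin d)
  set c := (2 : ℝ) ^ ((d : ℝ) / 2 - α) * Real.Gamma (((d : ℝ) - α) / 2) / Real.Gamma (α / 2)
  set K := ∫ z in ball (0 : E) 1, ‖z‖ ^ (α - d)
  set M := ∫ y, |f y|
  obtain ⟨A, hA₀, hA⟩ := f.decay d 0
  simp only [norm_iteratedFDeriv_zero, Real.norm_eq_abs] at hA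
  have hK : 0 ≤ K := setIntegral_nonneg measurableSet_ball fun z _ ↦ by positivity
  have hM : 0 ≤ M := integral_nonneg fun y ↦ abs_nonneg _
  refine ⟨|c| * (A * K + M) * 2 ^ (d - α) + 1, 1, by positivity, one_pos, fun x hx ↦ ?_⟩
  have hx₀ : x ≠ 0 := norm_pos_iff.mp (one_pos.trans_le hx)
  calc |rieszPotential d α (fun y => f y) x|
      ≤ |c| * ∫ y, |f y| * ‖x - y‖ ^ (α - d) := by
        rw [rieszPotential, abs_mul]
        refine mul_le_mul_of_nonneg_left (abs_integral_le_integral_abs.trans_eq ?_) (abs_nonneg c)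
        simp_rw [abs_mul, abs_of_nonneg (Real.rpow_nonneg (norm_nonneg _) _)]
    _ ≤ |c| * ((A * K + M) * (‖x‖ / 2) ^ (α - d)) := by
        gcongr
        have hdim : finrank ℝ E = d := finrank_euclideanSpace_fin
        exact integral_abs_mul_norm_sub_rpow_le volume f.integrable (by rw [hdim]; exact hA)
          (by rw [hdim]; linarith) (by linarith) hx₀
    _ = |c| * (A * K + M) * 2 ^ (d - α) * ‖x‖ ^ (α - d) := by
        rw [Real.div_rpow (norm_nonneg x) zero_le_two, div_eq_mul_inv, ← Real.rpow_neg zero_le_two,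
          neg_sub]
        ring
    _ ≤ (|c| * (A * K + M) * 2 ^ (d - α) + 1) * ‖x‖ ^ (α - d) := by
        gcongr
        exact le_add_of_nonneg_right zero_le_one

theorem stmt_2 (d : ℕ) (hd : 1 ≤ d) (α : ℝ) (hα : 0 < α) (hαd : α < d)
    (f : SchwartzMap (EuclideanSpace ℝ (Fin d)) ℝ) :
    ∃ C R : ℝ, 0 < C ∧ 0 < R ∧ ∀ x : EuclideanSpace ℝ (Fin d), R ≤ ‖x‖ →
      |rieszPotential d α (fun y => f y) x| ≤ C * ‖x‖ ^ (α - (d : ℝ)) :=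
  stmt_2_general d α hα hαd f
end
end

section
/- Let d ≥ 1 and 0 < α < d, and let f(x) = e^{−‖x‖} for x ∈ ℝ^d. Then there exist constants C, R > 0 such that I_α f(x) ≤ C ‖x‖^{α−d} for all x with ‖x‖ ≥ R; that is, I_α f(x) = O(‖x‖^{α−d}) as ‖x‖ → ∞. (This is Example 3.1 of the paper in the classical case k ≡ 0.) -/
/-! Split the integral at `‖y‖ = ‖x‖ / 2`. Where `‖y‖ ≤ ‖x‖ / 2` the kernel is at most
`(‖x‖ / 2) ^ (α - d)` and `e^{-‖y‖}` is integrable. Where `‖y‖ > ‖x‖ / 2` one factor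
`e^{-‖x‖/4}` can be pulled out of `e^{-‖y‖}`; what remains, `e^{-‖y‖/2} ‖x - y‖ ^ (α - d)`, is
bounded by the locally integrable singularity on the unit ball around `x` plus `e^{-‖y‖/2}`,
so its integral is bounded uniformly in `x`, and `e^{-‖x‖/4} = o(‖x‖ ^ (α - d))`. -/

open MeasureTheory Set

noncomputable section

open Metric Filter Asymptotics Real Module

section Pointwise

variable {E : Type*} [NormedAddCommGroup E]

theorem mul_rpow_norm_le_indicator_ball_add {s g : ℝ} (hs : s ≤ 0) (hg₀ : 0 ≤ g) (hg₁ : g ≤ 1)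
    (z : E) : g * ‖z‖ ^ s ≤ (ball (0 : E) 1).indicator (fun z => ‖z‖ ^ s) z + g := by
  by_cases hz : z ∈ ball (0 : E) 1
  · rw [indicator_of_mem hz]
    nlinarith [rpow_nonneg (norm_nonneg z) s]
  · have hz₁ : ‖z‖ ^ s ≤ 1 := rpow_le_one_of_one_le_of_nonpos (by simpa using hz) hs
    rw [indicator_of_notMem hz, zero_add]
    nlinarith

theorem exp_neg_norm_mul_rpow_norm_sub_le {s : ℝ} (hs : s ≤ 0) {x : E} (hx : 0 < ‖x‖) (y : E) :
    exp (-‖y‖) * ‖x - y‖ ^ s ≤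
      (‖x‖ / 2) ^ s * exp (-‖y‖) + exp (-(‖x‖ / 4)) *
        ((ball (0 : E) 1).indicator (fun z => ‖z‖ ^ s) (x - y) + exp (-(2⁻¹ * ‖y‖))) := by
  rcases le_or_gt ‖y‖ (‖x‖ / 2) with hy | hy
  · have hkernel : ‖x - y‖ ^ s ≤ (‖x‖ / 2) ^ s :=
      rpow_le_rpow_of_nonpos (by positivity) (by linarith [norm_sub_norm_le x y]) hs
    have hfar_nonneg : 0 ≤ exp (-(‖x‖ / 4)) *
        ((ball (0 : E) 1).indicator (fun z => ‖z‖ ^ s) (x - y) + exp (-(2⁻¹ * ‖y‖))) :=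
      mul_nonneg (exp_nonneg _) (add_nonneg
        (indicator_nonneg (fun z _ => rpow_nonneg (norm_nonneg z) s) _) (exp_nonneg _))
    calc exp (-‖y‖) * ‖x - y‖ ^ s ≤ (‖x‖ / 2) ^ s * exp (-‖y‖) := by
          rw [mul_comm]
          exact mul_le_mul_of_nonneg_right hkernel (exp_nonneg _)
      _ ≤ _ := le_add_of_nonneg_right hfar_nonneg
  · have hsplit : exp (-‖y‖) ≤ exp (-(‖x‖ / 4)) * exp (-(2⁻¹ * ‖y‖)) := by
      rw [← exp_add]
      exact exp_le_exp.2 (by linarith)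
    have hdecay : exp (-(2⁻¹ * ‖y‖)) ≤ 1 := exp_le_one_iff.2 (by linarith [norm_nonneg y])
    have hkernel_split := mul_rpow_norm_le_indicator_ball_add hs (exp_nonneg _) hdecay (x - y)
    calc exp (-‖y‖) * ‖x - y‖ ^ s
        ≤ exp (-(‖x‖ / 4)) * (exp (-(2⁻¹ * ‖y‖)) * ‖x - y‖ ^ s) := by
          rw [← mul_assoc]
          exact mul_le_mul_of_nonneg_right hsplit (rpow_nonneg (norm_nonneg _) s)
      _ ≤ exp (-(‖x‖ / 4)) *
            ((ball (0 : E) 1).indicator (fun z => ‖z‖ ^ s) (x - y) + exp (-(2⁻¹ * ‖y‖))) :=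
          mul_le_mul_of_nonneg_left hkernel_split (exp_nonneg _)
      _ ≤ _ := le_add_of_nonneg_left (by positivity)

end Pointwise

section AddHaar

variable {E : Type*} [NormedAddCommGroup E] [NormedSpace ℝ E] [Nontrivial E]
  [FiniteDimensional ℝ E] [MeasurableSpace E] [BorelSpace E] {μ : Measure E}
  [μ.IsAddHaarMeasure]

theorem integrable_exp_neg_mul_norm {a : ℝ} (ha : 0 < a) :
    Integrable (fun y : E => exp (-(a * ‖y‖))) μ := by
  rw [integrable_fun_norm_addHaar μ (f := fun t => exp (-(a * t)))]
  refine (integrableOn_rpow_mul_exp_neg_mul_rpow (s := ((finrank ℝ E - 1 : ℕ) : ℝ))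
    (neg_one_lt_zero.trans_le (Nat.cast_nonneg _)) one_pos ha).congr_fun (fun t _ => ?_)
    measurableSet_Ioi
  simp [rpow_natCast, neg_mul]

theorem integrable_indicator_ball_rpow_norm {s : ℝ} (hs : -(finrank ℝ E : ℝ) < s) :
    Integrable ((ball (0 : E) 1).indicator fun z => ‖z‖ ^ s) μ := by
  rw [integrable_indicator_iff measurableSet_ball]
  refine integrableOn_ball_of_norm_le_rpow (C := 1) (α := -s) finrank_pos (by linarith)
    (ae_of_all _ fun z => ?_)
    (by fun_prop : Measurable fun z : E => ‖z‖ ^ s).aestronglyMeasurable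
  simp [abs_of_nonneg (rpow_nonneg (norm_nonneg z) s)]

theorem integral_exp_neg_norm_mul_rpow_norm_sub_le {s : ℝ} (hs₀ : -(finrank ℝ E : ℝ) < s)
    (hs : s ≤ 0) {x : E} (hx : 0 < ‖x‖) :
    ∫ y, exp (-‖y‖) * ‖x - y‖ ^ s ∂μ ≤
      (‖x‖ / 2) ^ s * ∫ y, exp (-‖y‖) ∂μ + exp (-(‖x‖ / 4)) *
        (∫ z in ball 0 1, ‖z‖ ^ s ∂μ + ∫ y, exp (-(2⁻¹ * ‖y‖)) ∂μ) := by
  have hexp : Integrable (fun y : E => exp (-‖y‖)) μ := by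
    simpa using integrable_exp_neg_mul_norm (μ := μ) one_pos
  have hexp_half : Integrable (fun y : E => exp (-(2⁻¹ * ‖y‖))) μ :=
    integrable_exp_neg_mul_norm (inv_pos.2 two_pos)
  have hkernel := (integrable_indicator_ball_rpow_norm (μ := μ) hs₀).comp_sub_left x
  calc ∫ y, exp (-‖y‖) * ‖x - y‖ ^ s ∂μ
      ≤ ∫ y, ((‖x‖ / 2) ^ s * exp (-‖y‖) + exp (-(‖x‖ / 4)) *
          ((ball (0 : E) 1).indicator (fun z => ‖z‖ ^ s) (x - y) + exp (-(2⁻¹ * ‖y‖)))) ∂μ :=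
        integral_mono_of_nonneg (ae_of_all _ fun y => by positivity)
          ((hexp.const_mul _).add ((hkernel.fun_add hexp_half).const_mul _))
          (ae_of_all _ (exp_neg_norm_mul_rpow_norm_sub_le hs hx))
    _ = _ := by
        rw [integral_add (hexp.const_mul _) ((hkernel.fun_add hexp_half).const_mul _),
          integral_const_mul, integral_const_mul, integral_add hkernel hexp_half,
          integral_sub_left_eq_self ((ball (0 : E) 1).indicator fun z => ‖z‖ ^ s) μ x,
          integral_indicator measurableSet_ball]

theorem exists_integral_exp_neg_norm_mul_rpow_norm_sub_le {s : ℝ}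
    (hs₀ : -(finrank ℝ E : ℝ) < s) (hs : s ≤ 0) :
    ∃ C R : ℝ, 0 < C ∧ 0 < R ∧ ∀ x : E, R ≤ ‖x‖ →
      ∫ y, exp (-‖y‖) * ‖x - y‖ ^ s ∂μ ≤ C * ‖x‖ ^ s := by
  obtain ⟨K, hK, hK_bound⟩ :=
    (isLittleO_exp_neg_mul_rpow_atTop (a := 1 / 4) (by norm_num) s).isBigO.exists_pos
  obtain ⟨R, hR⟩ := eventually_atTop.1 (hK_bound.bound.and (eventually_gt_atTop 0))
  set E₁ := ∫ y, exp (-‖y‖) ∂μ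
  set M := ∫ z in ball 0 1, ‖z‖ ^ s ∂μ + ∫ y, exp (-(2⁻¹ * ‖y‖)) ∂μ
  have hE₁ : 0 ≤ E₁ := integral_nonneg fun _ => exp_nonneg _
  have hM : 0 ≤ M := add_nonneg
    (setIntegral_nonneg measurableSet_ball fun z _ => rpow_nonneg (norm_nonneg z) s)
    (integral_nonneg fun _ => exp_nonneg _)
  refine ⟨(2 : ℝ) ^ (-s) * E₁ + K * M + 1, max R 1, by positivity, by positivity, fun x hx => ?_⟩
  obtain ⟨hexp, hx₀⟩ := hR ‖x‖ (le_of_max_le_left hx)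
  have hxs : 0 ≤ ‖x‖ ^ s := rpow_nonneg hx₀.le s
  have hhalf : (‖x‖ / 2) ^ s = (2 : ℝ) ^ (-s) * ‖x‖ ^ s := by
    rw [div_rpow hx₀.le zero_le_two, rpow_neg zero_le_two, div_eq_inv_mul]
  have hdecay : exp (-(‖x‖ / 4)) ≤ K * ‖x‖ ^ s := by
    simpa [abs_of_nonneg hxs, div_eq_inv_mul, neg_mul] using hexp
  calc ∫ y, exp (-‖y‖) * ‖x - y‖ ^ s ∂μ
      ≤ (‖x‖ / 2) ^ s * E₁ + exp (-(‖x‖ / 4)) * M :=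
        integral_exp_neg_norm_mul_rpow_norm_sub_le hs₀ hs hx₀
    _ ≤ (2 : ℝ) ^ (-s) * ‖x‖ ^ s * E₁ + K * ‖x‖ ^ s * M := by
        rw [hhalf]
        gcongr
    _ ≤ ((2 : ℝ) ^ (-s) * E₁ + K * M + 1) * ‖x‖ ^ s := by nlinarith

end AddHaar

theorem stmt_3_general (d : ℕ) (α : ℝ) (hα : 0 < α) (hαd : α < d) :
    ∃ C R : ℝ, 0 < C ∧ 0 < R ∧ ∀ x : EuclideanSpace ℝ (Fin d), R ≤ ‖x‖ →
      rieszPotential d α (fun y => Real.exp (-‖y‖)) x ≤ C * ‖x‖ ^ (α - (d : ℝ)) := by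
  have : Nonempty (Fin d) := ⟨⟨0, Nat.cast_pos.1 (hα.trans hαd)⟩⟩
  obtain ⟨C, R, hC, hR, hbound⟩ :=
    exists_integral_exp_neg_norm_mul_rpow_norm_sub_le (μ := volume) (s := α - d)
      (E := EuclideanSpace ℝ (Fin d)) (by rw [finrank_euclideanSpace_fin]; linarith) (by linarith)
  have hc : 0 < (2 : ℝ) ^ ((d : ℝ) / 2 - α) * Gamma (((d : ℝ) - α) / 2) / Gamma (α / 2) :=
    div_pos (mul_pos (rpow_pos_of_pos two_pos _) (Gamma_pos_of_pos (by linarith)))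
      (Gamma_pos_of_pos (by linarith))
  refine ⟨_ * C, R, mul_pos hc hC, hR, fun x hx => ?_⟩
  rw [rieszPotential, mul_assoc]
  exact mul_le_mul_of_nonneg_left (hbound x hx) hc.le

theorem stmt_3 (d : ℕ) (hd : 1 ≤ d) (α : ℝ) (hα : 0 < α) (hαd : α < d) :
    ∃ C R : ℝ, 0 < C ∧ 0 < R ∧ ∀ x : EuclideanSpace ℝ (Fin d), R ≤ ‖x‖ →
      rieszPotential d α (fun y => Real.exp (-‖y‖)) x ≤ C * ‖x‖ ^ (α - (d : ℝ)) :=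
  stmt_3_general d α hα hαd
end
end
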